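/- arXiv:1406.2955 — 8 statements merged into one kernel-verified Lean document; each statement's English description precedes it below -/
import Mathlib

section
/- The sequence p_n satisfies p_0 = 1, p_1 = a_1, and the recurrence p_{n+1} = a_{n+1}·p_n + p_{n−1} for all 1 ≤ n ≤ m−1. -/
/-! With `E n = 2 * D n + 1` the recursion becomes `E (n+1) = (2 M_{n+1} + 1) * E n`.
Reading the first column of `E n` in the frame `σ (n+1)`, i.e. `w n k = E n (σ (n+1) k) 0`,
removes the permutations: since `σ (n+2) = σ (n+1) * stepPerm (a (n+1))`, one gets
`w (n+1) = transferMat (a (n+1)) *ᵥ w n` with the same matrix for even and odd `a`, and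
`w 0 = (1, 0, 0)`. For `w = (x, y, z)` the quantity `x + y - z` is `(-1)^n`, which with
`x + y + z = 2 s_{n,1} + 1` gives `p n = x + y`; two steps of the transfer matrix then give the
continuant recurrence. -/

/-- The transposition (1 3) on strings {1,2,3}, encoded as `Fin 3 = {0,1,2}`
(string `r` corresponds to `r - 1 : Fin 3`). -/
def trans13 : Equiv.Perm (Fin 3) := Equiv.swap 0 2

/-- The 3-cycle (1 3 2) sending 1 ↦ 3, 3 ↦ 2, 2 ↦ 1, encoded on `Fin 3`:
0 ↦ 2, 2 ↦ 1, 1 ↦ 0. -/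
def cyc132 : Equiv.Perm (Fin 3) := Equiv.swap 0 1 * Equiv.swap 0 2

/-- The matrix `M(a, i, j)`: the only (possibly) nonzero entries are ⌊a/2⌋ at (i,i),
⌈(a-1)/2⌉ at (i,j), ⌈a/2⌉ at (j,i) and ⌊(a-1)/2⌋ at (j,j). -/
def Mmat (a : ℕ) (i j : Fin 3) : Matrix (Fin 3) (Fin 3) ℤ :=
  Matrix.of fun r t =>
    if r = i ∧ t = i then ⌊(a : ℚ) / 2⌋
    else if r = i ∧ t = j then ⌈((a : ℚ) - 1) / 2⌉
    else if r = j ∧ t = i then ⌈(a : ℚ) / 2⌉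
    else if r = j ∧ t = j then ⌊((a : ℚ) - 1) / 2⌋
    else 0

/-- Kronecker delta δ_{rt}. -/
def kd (r t : Fin 3) : ℕ := if r = t then 1 else 0

/-- `mu c = 1` if `c` is odd, `0` if `c` is even. -/
def mu (c : ℕ) : ℕ := if Odd c then 1 else 0

open Matrix

def transferMat (a : ℤ) : Matrix (Fin 3) (Fin 3) ℤ := !![0, 0, 1; a, a - 1, 0; a + 1, a, 0]

def stepPerm (a : ℕ) : Equiv.Perm (Fin 3) := if Even a then trans13 else cyc132

lemma two_mul_Mmat_add_one_submatrix_perm (a : ℕ) (σ : Equiv.Perm (Fin 3)) :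
    (2 * Mmat a (σ 0) (σ 1) + 1).submatrix σ σ = 2 * Mmat a 0 1 + 1 := by
  ext r t
  simp [Mmat, two_mul, one_apply, σ.injective.eq_iff]

-- `/` on `ℤ` rounds down for a positive divisor.
lemma floor_ceil_natCast_half (a : ℕ) :
    ⌊(a : ℚ) / 2⌋ = (a : ℤ) / 2 ∧ ⌈(a : ℚ) / 2⌉ = ((a : ℤ) + 1) / 2 ∧
    ⌊((a : ℚ) - 1) / 2⌋ = ((a : ℤ) - 1) / 2 ∧ ⌈((a : ℚ) - 1) / 2⌉ = (a : ℤ) / 2 := by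
  have h1 := Rat.floor_intCast_div_natCast (a : ℤ) 2
  have h2 := Rat.ceil_intCast_div_natCast (a : ℤ) 2
  have h3 := Rat.floor_intCast_div_natCast ((a : ℤ) - 1) 2
  have h4 := Rat.ceil_intCast_div_natCast ((a : ℤ) - 1) 2
  push_cast at h1 h2 h3 h4
  refine ⟨h1, h2.trans ?_, h3, h4.trans ?_⟩ <;> omega

lemma two_mul_Mmat_add_one_submatrix_stepPerm (a : ℕ) :
    (2 * Mmat a 0 1 + 1).submatrix (stepPerm a) id = transferMat a := by
  obtain ⟨h1, h2, h3, h4⟩ := floor_ceil_natCast_half a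
  ext r t
  rcases Nat.even_or_odd a with ha | ha
  · have ha' := Nat.even_iff.mp ha
    fin_cases r <;> fin_cases t <;>
      simp [stepPerm, ha, trans13, transferMat, Mmat, two_mul, one_apply, h1, h2, h3, h4,
        Equiv.swap_apply_of_ne_of_ne] <;> omega
  · have ha' := Nat.odd_iff.mp ha
    fin_cases r <;> fin_cases t <;>
      simp [stepPerm, Nat.not_even_iff_odd.mpr ha, cyc132, transferMat, Mmat, two_mul, one_apply,
        h1, h2, h3, h4, Equiv.swap_apply_of_ne_of_ne] <;> omega

lemma mul_apply_mul_perm_eq_mulVec {n R : Type*} [Fintype n] [NonUnitalNonAssocSemiring R]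
    (A B : Matrix n n R) (σ τ : Equiv.Perm n) (c : n) :
    (fun k => (A * B) ((σ * τ) k) c) = (A.submatrix σ σ).submatrix τ id *ᵥ fun u => B (σ u) c := by
  funext k
  simp only [mul_apply, mulVec, dotProduct, Equiv.Perm.coe_mul, Function.comp_apply,
    submatrix_apply, id]
  exact (Equiv.sum_comp σ _).symm

lemma transferMat_mulVec (a : ℤ) (v : Fin 3 → ℤ) :
    transferMat a *ᵥ v = ![v 2, a * v 0 + (a - 1) * v 1, (a + 1) * v 0 + a * v 1] := by
  ext k
  fin_cases k <;> simp [transferMat, mulVec, dotProduct, Fin.sum_univ_three]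

section Transfer

variable {m : ℕ} {a : ℕ → ℤ} {w : ℕ → Fin 3 → ℤ}

lemma transfer_alternating (hw0 : w 0 = ![1, 0, 0])
    (hw : ∀ n, n + 1 ≤ m → w (n + 1) = transferMat (a (n + 1)) *ᵥ w n) :
    ∀ n ≤ m, w n 0 + w n 1 - w n 2 = (-1) ^ n := by
  intro n
  induction n with
  | zero => simp [hw0]
  | succ n ih =>
    intro hn
    rw [hw n hn, transferMat_mulVec]
    simp only [Matrix.cons_val_zero, Matrix.cons_val_one, Matrix.cons_val_two, Matrix.head_cons,
      Matrix.tail_cons]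
    linear_combination (-1 : ℤ) * ih (by omega)

lemma transfer_recurrence (hw0 : w 0 = ![1, 0, 0])
    (hw : ∀ n, n + 1 ≤ m → w (n + 1) = transferMat (a (n + 1)) *ᵥ w n) {n : ℕ} (hn : 1 ≤ n)
    (hnm : n + 1 ≤ m) :
    w (n + 1) 0 + w (n + 1) 1 = a (n + 1) * (w n 0 + w n 1) + (w (n - 1) 0 + w (n - 1) 1) := by
  obtain ⟨k, rfl⟩ : ∃ k, n = k + 1 := ⟨n - 1, by omega⟩
  have hk := transfer_alternating hw0 hw k (by omega)
  have hk1 := transfer_alternating hw0 hw (k + 1) (by omega)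
  have hx : w (k + 1) 0 = w k 2 := by rw [hw k (by omega), transferMat_mulVec]; rfl
  rw [hw (k + 1) hnm, transferMat_mulVec]
  simp only [Matrix.cons_val_zero, Matrix.cons_val_one, Nat.add_sub_cancel]
  linear_combination (-1 : ℤ) * hk1 - hk + hx

end Transfer

lemma two_mul_mu (n : ℕ) : 2 * (mu n : ℤ) = 1 - (-1) ^ n := by
  rcases Nat.even_or_odd n with h | h
  · simp [mu, Nat.not_odd_iff_even.mpr h, h.neg_one_pow]
  · simp [mu, h, h.neg_one_pow]

lemma sum_two_mul_add_one_perm_col_zero (D : Matrix (Fin 3) (Fin 3) ℤ) (σ : Equiv.Perm (Fin 3)) :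
    ∑ k, (2 * D + 1 : Matrix (Fin 3) (Fin 3) ℤ) (σ k) 0 = 2 * (D 0 0 + D 1 0 + D 2 0) + 1 := by
  rw [Equiv.sum_comp σ (fun r => (2 * D + 1 : Matrix (Fin 3) (Fin 3) ℤ) r 0), Fin.sum_univ_three]
  simp only [two_mul, Matrix.add_apply, one_apply, if_pos, one_ne_zero, Fin.reduceEq, ite_false,
    add_zero]
  ring

theorem p_recurrence_general
    (m : ℕ) (hm : 1 ≤ m) (a : ℕ → ℕ)
    (σ : ℕ → Equiv.Perm (Fin 3))
    (hσ1 : σ 1 = 1)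
    (hσ : ∀ n, 1 ≤ n → n ≤ m →
      σ (n + 1) = if Even (a n) then σ n * trans13 else σ n * cyc132)
    (D : ℕ → Matrix (Fin 3) (Fin 3) ℤ)
    (hD0 : D 0 = 0)
    (hD : ∀ n, n + 1 ≤ m →
      D (n + 1) = 2 * Mmat (a (n + 1)) (σ (n + 1) 0) (σ (n + 1) 1) * D n + D n
        + Mmat (a (n + 1)) (σ (n + 1) 0) (σ (n + 1) 1))
    (s : ℕ → Fin 3 → ℤ)
    (hs : ∀ n t, s n t = D n 0 t + D n 1 t + D n 2 t)
    (p : ℕ → ℤ)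
    (hp : ∀ n, p n = s n 0 + 1 - (mu n : ℤ))
 :
    p 0 = 1 ∧ p 1 = (a 1 : ℤ) ∧
      ∀ n, 1 ≤ n → n + 1 ≤ m →
        p (n + 1) = (a (n + 1) : ℤ) * p n + p (n - 1) := by
  set w : ℕ → Fin 3 → ℤ :=
    fun n k => (2 * D n + 1 : Matrix (Fin 3) (Fin 3) ℤ) (σ (n + 1) k) 0 with hw_def
  have hw0 : w 0 = ![1, 0, 0] := by
    ext k; fin_cases k <;> simp [w, hD0, hσ1, one_apply]
  have hw : ∀ n, n + 1 ≤ m → w (n + 1) = transferMat (a (n + 1)) *ᵥ w n := by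
    intro n hn
    have hσ' : σ (n + 1 + 1) = σ (n + 1) * stepPerm (a (n + 1)) := by
      rw [hσ (n + 1) (by omega) hn, stepPerm, mul_ite]
    have hE : 2 * D (n + 1) + 1 =
        (2 * Mmat (a (n + 1)) (σ (n + 1) 0) (σ (n + 1) 1) + 1) * (2 * D n + 1) := by
      rw [hD n hn]; noncomm_ring
    simp only [hw_def, hE, hσ']
    rw [mul_apply_mul_perm_eq_mulVec, two_mul_Mmat_add_one_submatrix_perm, two_mul_Mmat_add_one_submatrix_stepPerm]
  have hpw : ∀ n ≤ m, p n = w n 0 + w n 1 := by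
    intro n hn
    have hsum : w n 0 + w n 1 + w n 2 = 2 * s n 0 + 1 := by
      rw [hs, ← sum_two_mul_add_one_perm_col_zero, Fin.sum_univ_three]
    linarith [hp n, two_mul_mu n, transfer_alternating (a := fun k => (a k : ℤ)) hw0 hw n hn]
  refine ⟨?_, ?_, fun n hn hnm => ?_⟩
  · rw [hpw 0 (by omega), hw0]; simp
  · rw [hpw 1 hm, hw 0 hm, hw0, transferMat_mulVec]; simp
  · rw [hpw (n + 1) hnm, hpw n (by omega), hpw (n - 1) (by omega)]
    exact transfer_recurrence (a := fun k => (a k : ℤ)) hw0 hw hn hnm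

theorem p_recurrence
    (m : ℕ) (hm : 1 ≤ m) (a : ℕ → ℕ)
    (ha : ∀ n, 1 ≤ n → n ≤ m → 0 < a n)
    (σ : ℕ → Equiv.Perm (Fin 3))
    (hσ1 : σ 1 = 1)
    (hσ : ∀ n, 1 ≤ n → n ≤ m →
      σ (n + 1) = if Even (a n) then σ n * trans13 else σ n * cyc132)
    (D : ℕ → Matrix (Fin 3) (Fin 3) ℤ)
    (hD0 : D 0 = 0)
    (hD : ∀ n, n + 1 ≤ m →
      D (n + 1) = 2 * Mmat (a (n + 1)) (σ (n + 1) 0) (σ (n + 1) 1) * D n + D n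
        + Mmat (a (n + 1)) (σ (n + 1) 0) (σ (n + 1) 1))
    (s : ℕ → Fin 3 → ℤ)
    (hs : ∀ n t, s n t = D n 0 t + D n 1 t + D n 2 t)
    (p q : ℕ → ℤ)
    (hp : ∀ n, p n = s n 0 + 1 - (mu n : ℤ))
    (hq : ∀ n, q n = s n 2 + (mu n : ℤ))
 :
    p 0 = 1 ∧ p 1 = (a 1 : ℤ) ∧
      ∀ n, 1 ≤ n → n + 1 ≤ m →
        p (n + 1) = (a (n + 1) : ℤ) * p n + p (n - 1) :=
  p_recurrence_general m hm a σ hσ1 hσ D hD0 hD s hs p hp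
end

section
/- The sequence q_n satisfies q_0 = 0, q_1 = 1, and the recurrence q_{n+1} = a_{n+1}·q_n + q_{n−1} for all 1 ≤ n ≤ m−1. -/
/-!
Since `2 (2 M D + D + M) + 1 = (2 M + 1)(2 D + 1)`, the matrices `W_n = 2 D_n + 1` satisfy
`W_{n+1} = (2 M_{n+1} + 1) W_n` with `W_0 = 1`. Read the third column of `W_n` in the frame
`(i_{n+1}, j_{n+1}, k_{n+1})` as a triple `(x, y, z)`. The parity-dependent choice of `σ_{n+2}`
exactly compensates the parity-dependent shape of `M_{n+1}`: for both parities of `a = a_{n+1}`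
the triple becomes `(z, a x + (a - 1) y, (a + 1) x + a y)`. This step flips the sign of
`z - x - y`, which starts at `1`, and sends `x - y + z` to the old sum `x + y + z`; these two facts
give `Σ_{n+1} = a Σ_n + Σ_{n-1} - a (-1)^n` for the sums `Σ_n = x + y + z`. Finally
`Σ_n = 2 s_{n,3} + 1 = 2 q_n + (-1)^n`, and the recurrence for `q` drops out.
-/

open Matrix

def tripleStep {R : Type*} [CommRing R] (a : R) (t : Fin 3 → R) : Fin 3 → R :=
  ![t 2, a * t 0 + (a - 1) * t 1, (a + 1) * t 0 + a * t 1]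

def parityPerm (a : ℕ) : Equiv.Perm (Fin 3) := if Even a then trans13 else cyc132

section TripleStep

variable {R : Type*} [CommRing R]

lemma tripleStep_two_sub_zero_sub_one (a : R) (t : Fin 3 → R) :
    tripleStep a t 2 - tripleStep a t 0 - tripleStep a t 1 = -(t 2 - t 0 - t 1) := by
  simp only [tripleStep, Matrix.cons_val]; ring

lemma tripleStep_zero_sub_one_add_two (a : R) (t : Fin 3 → R) :
    tripleStep a t 0 - tripleStep a t 1 + tripleStep a t 2 = ∑ i, t i := by
  simp only [tripleStep, Matrix.cons_val, Fin.sum_univ_three]; ring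

lemma sum_tripleStep (a : R) (t : Fin 3 → R) :
    ∑ i, tripleStep a t i = a * ∑ i, t i + (t 0 - t 1 + t 2) - a * (t 2 - t 0 - t 1) := by
  simp only [tripleStep, Matrix.cons_val, Fin.sum_univ_three]; ring

variable {m : ℕ} {b : ℕ → R} {t : ℕ → Fin 3 → R}

lemma two_sub_zero_sub_one_eq_neg_one_pow (h0 : t 0 = ![0, 0, 1])
    (ht : ∀ n < m, t (n + 1) = tripleStep (b (n + 1)) (t n)) {n : ℕ} (hn : n ≤ m) :
    t n 2 - t n 0 - t n 1 = (-1) ^ n := by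
  induction n with
  | zero => simp [h0]
  | succ n ih =>
    rw [ht n hn, tripleStep_two_sub_zero_sub_one, ih (by omega), pow_succ]
    ring

lemma sum_succ_eq_of_tripleStep (h0 : t 0 = ![0, 0, 1])
    (ht : ∀ n < m, t (n + 1) = tripleStep (b (n + 1)) (t n)) {n : ℕ} (hn : 1 ≤ n)
    (hnm : n + 1 ≤ m) :
    ∑ i, t (n + 1) i = b (n + 1) * ∑ i, t n i + ∑ i, t (n - 1) i - b (n + 1) * (-1) ^ n := by
  have hprev : t n 0 - t n 1 + t n 2 = ∑ i, t (n - 1) i := by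
    obtain ⟨k, rfl⟩ := Nat.exists_eq_add_of_le' hn
    rw [ht k (by omega), tripleStep_zero_sub_one_add_two, Nat.add_sub_cancel]
  rw [ht n hnm, sum_tripleStep, hprev, two_sub_zero_sub_one_eq_neg_one_pow h0 ht (by omega)]

end TripleStep

lemma mulVec_comp_perm {n R : Type*} [Fintype n] [NonUnitalNonAssocSemiring R]
    (M : Matrix n n R) (e : Equiv.Perm n) (w : n → R) :
    (M *ᵥ w) ∘ e = M.submatrix e e *ᵥ (w ∘ e) := by
  rw [Matrix.submatrix_mulVec_equiv, Function.comp_assoc, Equiv.self_comp_symm, Function.comp_id]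

lemma two_mul_add_one_of_eq {R : Type*} [Ring R] {M D D' : R} (h : D' = 2 * M * D + D + M) :
    2 * D' + 1 = (2 * M + 1) * (2 * D + 1) := by
  rw [h]; noncomm_ring

lemma Mmat_submatrix (a : ℕ) (e : Equiv.Perm (Fin 3)) (i j : Fin 3) :
    (Mmat a (e i) (e j)).submatrix e e = Mmat a i j := by
  ext r c
  simp [Mmat, e.injective.eq_iff]

lemma two_mul_Mmat_add_one_mulVec (a : ℕ) (t : Fin 3 → ℤ) :
    (2 * Mmat a 0 1 + 1) *ᵥ t =
      ![(2 * ⌊(a : ℚ) / 2⌋ + 1) * t 0 + 2 * ⌈((a : ℚ) - 1) / 2⌉ * t 1,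
        2 * ⌈(a : ℚ) / 2⌉ * t 0 + (2 * ⌊((a : ℚ) - 1) / 2⌋ + 1) * t 1, t 2] := by
  ext r
  fin_cases r <;> simp [two_mul, Matrix.mulVec, dotProduct, Fin.sum_univ_three, Mmat]

lemma mulVec_comp_parityPerm (a : ℕ) (t : Fin 3 → ℤ) :
    ((2 * Mmat a 0 1 + 1) *ᵥ t) ∘ parityPerm a = tripleStep (a : ℤ) t := by
  rw [two_mul_Mmat_add_one_mulVec]
  obtain ⟨h, rfl | rfl⟩ := Nat.even_or_odd' a
  · have h1 : ⌊((2 * h : ℕ) : ℚ) / 2⌋ = h := by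
      rw [Int.floor_eq_iff]; push_cast; constructor <;> linarith
    have h2 : ⌈((2 * h : ℕ) : ℚ) / 2⌉ = h := by
      rw [Int.ceil_eq_iff]; push_cast; constructor <;> linarith
    have h3 : ⌈(((2 * h : ℕ) : ℚ) - 1) / 2⌉ = h := by
      rw [Int.ceil_eq_iff]; push_cast; constructor <;> linarith
    have h4 : ⌊(((2 * h : ℕ) : ℚ) - 1) / 2⌋ = h - 1 := by
      rw [Int.floor_eq_iff]; push_cast; constructor <;> linarith
    have hπ : trans13 0 = 2 ∧ trans13 1 = 1 ∧ trans13 2 = 0 := by decide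
    rw [h1, h2, h3, h4]
    ext r
    fin_cases r <;>
      simp only [parityPerm, even_two_mul, if_true, tripleStep, hπ, Function.comp_apply,
        Fin.zero_eta, Fin.mk_one, Fin.reduceFinMk, Matrix.cons_val] <;> push_cast <;> ring
  · have h1 : ⌊((2 * h + 1 : ℕ) : ℚ) / 2⌋ = h := by
      rw [Int.floor_eq_iff]; push_cast; constructor <;> linarith
    have h2 : ⌈((2 * h + 1 : ℕ) : ℚ) / 2⌉ = h + 1 := by
      rw [Int.ceil_eq_iff]; push_cast; constructor <;> linarith
    have h3 : ⌈(((2 * h + 1 : ℕ) : ℚ) - 1) / 2⌉ = h := by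
      rw [Int.ceil_eq_iff]; push_cast; constructor <;> linarith
    have h4 : ⌊(((2 * h + 1 : ℕ) : ℚ) - 1) / 2⌋ = h := by
      rw [Int.floor_eq_iff]; push_cast; constructor <;> linarith
    have hodd : ¬ Even (2 * h + 1) := by simp
    have hπ : cyc132 0 = 2 ∧ cyc132 1 = 0 ∧ cyc132 2 = 1 := by decide
    rw [h1, h2, h3, h4]
    ext r
    fin_cases r <;>
      simp only [parityPerm, hodd, if_false, tripleStep, hπ, Function.comp_apply,
        Fin.zero_eta, Fin.mk_one, Fin.reduceFinMk, Matrix.cons_val] <;> push_cast <;> ring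

lemma mulVec_Mmat_comp_mul_parityPerm (a : ℕ) (e : Equiv.Perm (Fin 3)) (w : Fin 3 → ℤ) :
    ((2 * Mmat a (e 0) (e 1) + 1) *ᵥ w) ∘ (e * parityPerm a) = tripleStep (a : ℤ) (w ∘ e) := by
  have hsub : (2 * Mmat a (e 0) (e 1) + 1).submatrix e e = 2 * Mmat a 0 1 + 1 := by
    simp only [two_mul, Matrix.submatrix_add, Pi.add_apply, Matrix.submatrix_one_equiv,
      Mmat_submatrix]
  rw [Equiv.Perm.coe_mul, ← Function.comp_assoc, mulVec_comp_perm, hsub, mulVec_comp_parityPerm]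

lemma one_sub_two_mul_mu (n : ℕ) : 1 - 2 * (mu n : ℤ) = (-1) ^ n := by
  rcases Nat.even_or_odd n with h | h
  · simp [mu, h.neg_one_pow, Nat.not_odd_iff_even.mpr h]
  · simp [mu, h.neg_one_pow, h]

theorem q_recurrence_general
    (m : ℕ) (hm : 1 ≤ m) (a : ℕ → ℕ)
    (σ : ℕ → Equiv.Perm (Fin 3))
    (hσ1 : σ 1 = 1)
    (hσ : ∀ n, 1 ≤ n → n ≤ m →
      σ (n + 1) = if Even (a n) then σ n * trans13 else σ n * cyc132)
    (D : ℕ → Matrix (Fin 3) (Fin 3) ℤ)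
    (hD0 : D 0 = 0)
    (hD : ∀ n, n + 1 ≤ m →
      D (n + 1) = 2 * Mmat (a (n + 1)) (σ (n + 1) 0) (σ (n + 1) 1) * D n + D n
        + Mmat (a (n + 1)) (σ (n + 1) 0) (σ (n + 1) 1))
    (s : ℕ → Fin 3 → ℤ)
    (hs : ∀ n t, s n t = D n 0 t + D n 1 t + D n 2 t)
    (q : ℕ → ℤ)
    (hq : ∀ n, q n = s n 2 + (mu n : ℤ))
 :
    q 0 = 0 ∧ q 1 = 1 ∧
      ∀ n, 1 ≤ n → n + 1 ≤ m →
        q (n + 1) = (a (n + 1) : ℤ) * q n + q (n - 1) := by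
  let t : ℕ → Fin 3 → ℤ := fun n => (2 * D n + 1)ᵀ 2 ∘ σ (n + 1)
  have ht0 : t 0 = ![0, 0, 1] := by
    ext r; fin_cases r <;> simp [t, hD0, hσ1]
  have ht : ∀ n < m, t (n + 1) = tripleStep (a (n + 1) : ℤ) (t n) := by
    intro n hn
    have hσ' : σ (n + 1 + 1) = σ (n + 1) * parityPerm (a (n + 1)) := by
      rw [hσ (n + 1) (by omega) hn, parityPerm, mul_ite]
    simp only [t]
    rw [two_mul_add_one_of_eq (hD n hn), hσ', ← mulVec_Mmat_comp_mul_parityPerm]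
    rfl
  have hsum : ∀ n, ∑ r, t n r = 2 * q n + (-1) ^ n := by
    intro n
    simp only [t, Function.comp_apply]
    rw [Equiv.sum_comp (σ (n + 1)) ((2 * D n + 1)ᵀ 2), ← one_sub_two_mul_mu, hq, hs]
    simp [Fin.sum_univ_three, two_mul, Matrix.one_apply]
    ring
  refine ⟨?_, ?_, fun n hn hnm => ?_⟩
  · have h0 := hsum 0
    simp [ht0, Fin.sum_univ_three] at h0
    linarith
  · have h1 := hsum 1
    simp [ht 0 hm, ht0, tripleStep, Fin.sum_univ_three] at h1
    linarith
  · have hrec := sum_succ_eq_of_tripleStep (b := fun n => (a n : ℤ)) ht0 ht hn hnm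
    rw [hsum, hsum, hsum] at hrec
    obtain ⟨k, rfl⟩ := Nat.exists_eq_add_of_le' hn
    simp only [Nat.add_sub_cancel, pow_succ] at hrec ⊢
    linarith

theorem q_recurrence
    (m : ℕ) (hm : 1 ≤ m) (a : ℕ → ℕ)
    (ha : ∀ n, 1 ≤ n → n ≤ m → 0 < a n)
    (σ : ℕ → Equiv.Perm (Fin 3))
    (hσ1 : σ 1 = 1)
    (hσ : ∀ n, 1 ≤ n → n ≤ m →
      σ (n + 1) = if Even (a n) then σ n * trans13 else σ n * cyc132)
    (D : ℕ → Matrix (Fin 3) (Fin 3) ℤ)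
    (hD0 : D 0 = 0)
    (hD : ∀ n, n + 1 ≤ m →
      D (n + 1) = 2 * Mmat (a (n + 1)) (σ (n + 1) 0) (σ (n + 1) 1) * D n + D n
        + Mmat (a (n + 1)) (σ (n + 1) 0) (σ (n + 1) 1))
    (s : ℕ → Fin 3 → ℤ)
    (hs : ∀ n t, s n t = D n 0 t + D n 1 t + D n 2 t)
    (p q : ℕ → ℤ)
    (hp : ∀ n, p n = s n 0 + 1 - (mu n : ℤ))
    (hq : ∀ n, q n = s n 2 + (mu n : ℤ))
 :
    q 0 = 0 ∧ q 1 = 1 ∧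
      ∀ n, 1 ≤ n → n + 1 ≤ m →
        q (n + 1) = (a (n + 1) : ℤ) * q n + q (n - 1) :=
  q_recurrence_general m hm a σ hσ1 hσ D hD0 hD s hs q hq
end

section
/- For every 0 ≤ n ≤ m−1 and every t ∈ {1,2,3}, writing i = i_{n+1}, j = j_{n+1}, k = k_{n+1}, a = a_{n+1}, and d_{rt} = d_{rt}(n), one has s_{n+1,t} = a·s_{n,t} + a·(d_{it} + d_{jt} − d_{kt} + δ_{it} + δ_{jt}) + (d_{it} − d_{jt} + d_{kt} − δ_{jt}). -/
/-!
Column sums are `1 ᵥ* D`. The columns `i`, `j`, `k` of `M(a, i, j)` sum to `a`, `a - 1`, `0`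
(because `⌊x/2⌋ + ⌈x/2⌉ = x` for an integer `x`), so
`1 ᵥ* (2 M D + D + M) = 1 ᵥ* D + 2a D_i + 2(a - 1) D_j + a e_i + (a - 1) e_j`.
Since `σ_{n+1}` is a permutation, `s_n = D_i + D_j + D_k`, and the claim is this identity rearranged.
-/

open Matrix

theorem Int.floor_add_ceil_intCast_div_two {k : Type*} [Field k] [LinearOrder k]
    [IsStrictOrderedRing k] [FloorRing k] (z : ℤ) : ⌊(z : k) / 2⌋ + ⌈(z : k) / 2⌉ = z := by
  have hfloor (w : ℤ) : ⌊(w : k) / 2⌋ = w / 2 := by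
    simpa using Int.floor_div_natCast (w : k) 2
  have hceil : ⌈(z : k) / 2⌉ = -((-z) / 2) := by
    rw [← neg_neg ⌈_⌉, ← Int.floor_neg, ← hfloor, Int.cast_neg, neg_div]
  rw [hfloor, hceil]
  omega

theorem one_vecMul_Mmat (a : ℕ) {i j : Fin 3} (hij : i ≠ j) :
    (1 : Fin 3 → ℤ) ᵥ* Mmat a i j = Pi.single i (a : ℤ) + Pi.single j ((a : ℤ) - 1) := by
  have hpred := Int.floor_add_ceil_intCast_div_two (k := ℚ) ((a : ℤ) - 1)
  have hself := Int.floor_add_ceil_intCast_div_two (k := ℚ) (a : ℤ)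
  push_cast at hpred hself
  ext t
  rw [vecMul, dotProduct, Finset.sum_eq_add i j hij (fun r _ hr => ?_) (by simp) (by simp)]
  · simp only [Pi.one_apply, one_mul, Mmat, of_apply, Pi.add_apply, Pi.single_apply]
    by_cases hti : t = i <;> by_cases htj : t = j <;> simp_all [eq_comm]; omega
  · simp [Mmat, hr.1, hr.2]

theorem one_vecMul_Mmat_recurrence (a : ℕ) {i j : Fin 3} (hij : i ≠ j)
    (D : Matrix (Fin 3) (Fin 3) ℤ) :
    (1 : Fin 3 → ℤ) ᵥ* (2 * Mmat a i j * D + D + Mmat a i j)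
      = 1 ᵥ* D + (2 * a : ℤ) • D.row i + (2 * ((a : ℤ) - 1)) • D.row j
        + Pi.single i (a : ℤ) + Pi.single j ((a : ℤ) - 1) := by
  rw [two_mul, add_mul, vecMul_add, vecMul_add, vecMul_add, ← vecMul_vecMul,
    one_vecMul_Mmat a hij, add_vecMul, single_vecMul, single_vecMul]
  ext t
  simp only [Pi.add_apply, Pi.smul_apply, row_apply, smul_eq_mul]
  ring

theorem one_vecMul_apply_fin_three {R : Type*} [NonAssocSemiring R]
    (A : Matrix (Fin 3) (Fin 3) R) (t : Fin 3) :
    ((1 : Fin 3 → R) ᵥ* A) t = A 0 t + A 1 t + A 2 t := by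
  simp [vecMul, dotProduct, Fin.sum_univ_three]

theorem single_apply_eq_mul_kd (i t : Fin 3) (x : ℤ) :
    (Pi.single i x : Fin 3 → ℤ) t = x * kd i t := by
  simp [kd, Pi.single_apply, eq_comm]

theorem sum_recurrence_general
    (m : ℕ) (a : ℕ → ℕ)
    (σ : ℕ → Equiv.Perm (Fin 3))
    (D : ℕ → Matrix (Fin 3) (Fin 3) ℤ)
    (hD : ∀ n, n + 1 ≤ m →
      D (n + 1) = 2 * Mmat (a (n + 1)) (σ (n + 1) 0) (σ (n + 1) 1) * D n + D n
        + Mmat (a (n + 1)) (σ (n + 1) 0) (σ (n + 1) 1))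
    (s : ℕ → Fin 3 → ℤ)
    (hs : ∀ n t, s n t = D n 0 t + D n 1 t + D n 2 t)
 :
    ∀ n, n + 1 ≤ m → ∀ t : Fin 3,
      s (n + 1) t = (a (n + 1) : ℤ) * s n t
        + (a (n + 1) : ℤ) * (D n (σ (n + 1) 0) t + D n (σ (n + 1) 1) t
            - D n (σ (n + 1) 2) t + (kd (σ (n + 1) 0) t : ℤ) + (kd (σ (n + 1) 1) t : ℤ))
        + (D n (σ (n + 1) 0) t - D n (σ (n + 1) 1) t + D n (σ (n + 1) 2) t
            - (kd (σ (n + 1) 1) t : ℤ)) := by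
  intro n hn t
  set τ := σ (n + 1)
  have h01 : τ 0 ≠ τ 1 := τ.injective.ne (by decide)
  have hsum : s n t = D n (τ 0) t + D n (τ 1) t + D n (τ 2) t := by
    simpa [hs, Fin.sum_univ_three] using (Equiv.sum_comp τ (fun r => D n r t)).symm
  rw [hs, ← one_vecMul_apply_fin_three, hD n hn, one_vecMul_Mmat_recurrence _ h01]
  simp only [Pi.add_apply, Pi.smul_apply, smul_eq_mul, row_apply, single_apply_eq_mul_kd]
  rw [one_vecMul_apply_fin_three, ← hs, hsum]
  ring

theorem sum_recurrence
    (m : ℕ) (hm : 1 ≤ m) (a : ℕ → ℕ)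
    (ha : ∀ n, 1 ≤ n → n ≤ m → 0 < a n)
    (σ : ℕ → Equiv.Perm (Fin 3))
    (hσ1 : σ 1 = 1)
    (hσ : ∀ n, 1 ≤ n → n ≤ m →
      σ (n + 1) = if Even (a n) then σ n * trans13 else σ n * cyc132)
    (D : ℕ → Matrix (Fin 3) (Fin 3) ℤ)
    (hD0 : D 0 = 0)
    (hD : ∀ n, n + 1 ≤ m →
      D (n + 1) = 2 * Mmat (a (n + 1)) (σ (n + 1) 0) (σ (n + 1) 1) * D n + D n
        + Mmat (a (n + 1)) (σ (n + 1) 0) (σ (n + 1) 1))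
    (s : ℕ → Fin 3 → ℤ)
    (hs : ∀ n t, s n t = D n 0 t + D n 1 t + D n 2 t)
 :
    ∀ n, n + 1 ≤ m → ∀ t : Fin 3,
      s (n + 1) t = (a (n + 1) : ℤ) * s n t
        + (a (n + 1) : ℤ) * (D n (σ (n + 1) 0) t + D n (σ (n + 1) 1) t
            - D n (σ (n + 1) 2) t + (kd (σ (n + 1) 0) t : ℤ) + (kd (σ (n + 1) 1) t : ℤ))
        + (D n (σ (n + 1) 0) t - D n (σ (n + 1) 1) t + D n (σ (n + 1) 2) t
            - (kd (σ (n + 1) 1) t : ℤ)) :=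
  sum_recurrence_general m a σ D hD s hs
end

section
/- For every 0 ≤ n ≤ m−1 and every t ∈ {1,2,3}, writing i = i_{n+1}, j = j_{n+1}, k = k_{n+1}, a = a_{n+1}, d_{rt} = d_{rt}(n), and d'_{rt} = d_{rt}(n+1), one has s_{n+1,t} = (1 + 2a)·d_{it} + (2a − 1)·d_{jt} + d_{kt} + a·δ_{it} + (a − 1)·δ_{jt}. -/
lemma floor_add_ceil_half (c : ℤ) : ⌊(c : ℚ) / 2⌋ + ⌈(c : ℚ) / 2⌉ = c := by
  have floor_eq := Rat.floor_intCast_div_natCast c 2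
  have ceil_eq := Rat.ceil_intCast_div_natCast c 2
  push_cast at floor_eq ceil_eq
  omega

lemma Matrix.sum_mul_apply {l m n R : Type*} [Fintype l] [Fintype m]
    [NonUnitalNonAssocSemiring R] (M : Matrix l m R) (N : Matrix m n R) (t : n) :
    ∑ r, (M * N) r t = ∑ u, (∑ r, M r u) * N u t := by
  simp only [Matrix.mul_apply, Finset.sum_mul]
  exact Finset.sum_comm

lemma sum_fin_three_perm {M : Type*} [AddCommMonoid M] (π : Equiv.Perm (Fin 3))
    (f : Fin 3 → M) :
    ∑ u, f u = f (π 0) + f (π 1) + f (π 2) := by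
  rw [← Equiv.sum_comp π f, Fin.sum_univ_three]

lemma sum_Mmat_apply (a : ℕ) {i j : Fin 3} (hij : i ≠ j) (t : Fin 3) :
    ∑ r, Mmat a i j r t = a * kd i t + (a - 1) * kd j t := by
  have floor_ceil_a := floor_add_ceil_half a
  have floor_ceil_pred := floor_add_ceil_half (a - 1)
  push_cast at floor_ceil_a floor_ceil_pred
  rw [Fintype.sum_eq_add i j hij fun r hr => by simp [Mmat, hr.1, hr.2]]
  by_cases hti : t = i
  · subst hti
    simp [Mmat, kd, hij, hij.symm]
    linarith
  by_cases htj : t = j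
  · subst htj
    simp [Mmat, kd, hij, hij.symm]
    linarith
  · simp [Mmat, kd, hti, htj, Ne.symm hti, Ne.symm htj]

lemma sum_Mmat_mul_apply (a : ℕ) {i j : Fin 3} (hij : i ≠ j)
    (D : Matrix (Fin 3) (Fin 3) ℤ) (t : Fin 3) :
    ∑ r, (Mmat a i j * D) r t = a * D i t + (a - 1) * D j t := by
  simp only [Matrix.sum_mul_apply, sum_Mmat_apply a hij, kd, add_mul, Finset.sum_add_distrib]
  simp

theorem sum_formula_general
    (m : ℕ) (a : ℕ → ℕ)
    (σ : ℕ → Equiv.Perm (Fin 3))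
    (D : ℕ → Matrix (Fin 3) (Fin 3) ℤ)
    (hD : ∀ n, n + 1 ≤ m →
      D (n + 1) = 2 * Mmat (a (n + 1)) (σ (n + 1) 0) (σ (n + 1) 1) * D n + D n
        + Mmat (a (n + 1)) (σ (n + 1) 0) (σ (n + 1) 1))
    (s : ℕ → Fin 3 → ℤ)
    (hs : ∀ n t, s n t = D n 0 t + D n 1 t + D n 2 t)
 :
    ∀ n, n + 1 ≤ m → ∀ t : Fin 3,
      s (n + 1) t = (1 + 2 * (a (n + 1) : ℤ)) * D n (σ (n + 1) 0) t
        + (2 * (a (n + 1) : ℤ) - 1) * D n (σ (n + 1) 1) t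
        + D n (σ (n + 1) 2) t
        + (a (n + 1) : ℤ) * (kd (σ (n + 1) 0) t : ℤ)
        + ((a (n + 1) : ℤ) - 1) * (kd (σ (n + 1) 1) t : ℤ) := by
  intro n hn t
  have hij : σ (n + 1) 0 ≠ σ (n + 1) 1 := (σ (n + 1)).injective.ne (by decide)
  have col_sum : ∑ r, D (n + 1) r t
      = 2 * (a (n + 1) * D n (σ (n + 1) 0) t + (a (n + 1) - 1) * D n (σ (n + 1) 1) t)
        + (D n (σ (n + 1) 0) t + D n (σ (n + 1) 1) t + D n (σ (n + 1) 2) t)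
        + (a (n + 1) * kd (σ (n + 1) 0) t + (a (n + 1) - 1) * kd (σ (n + 1) 1) t) := by
    rw [hD n hn, ← sum_fin_three_perm (σ (n + 1)) (fun r => D n r t), ← sum_Mmat_apply _ hij,
      ← sum_Mmat_mul_apply _ hij]
    simp only [two_mul, Matrix.add_mul, Matrix.add_apply, Finset.sum_add_distrib]
  rw [hs, ← Fin.sum_univ_three (fun r => D (n + 1) r t), col_sum]
  ring

theorem sum_formula
    (m : ℕ) (hm : 1 ≤ m) (a : ℕ → ℕ)
    (ha : ∀ n, 1 ≤ n → n ≤ m → 0 < a n)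
    (σ : ℕ → Equiv.Perm (Fin 3))
    (hσ1 : σ 1 = 1)
    (hσ : ∀ n, 1 ≤ n → n ≤ m →
      σ (n + 1) = if Even (a n) then σ n * trans13 else σ n * cyc132)
    (D : ℕ → Matrix (Fin 3) (Fin 3) ℤ)
    (hD0 : D 0 = 0)
    (hD : ∀ n, n + 1 ≤ m →
      D (n + 1) = 2 * Mmat (a (n + 1)) (σ (n + 1) 0) (σ (n + 1) 1) * D n + D n
        + Mmat (a (n + 1)) (σ (n + 1) 0) (σ (n + 1) 1))
    (s : ℕ → Fin 3 → ℤ)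
    (hs : ∀ n t, s n t = D n 0 t + D n 1 t + D n 2 t)
 :
    ∀ n, n + 1 ≤ m → ∀ t : Fin 3,
      s (n + 1) t = (1 + 2 * (a (n + 1) : ℤ)) * D n (σ (n + 1) 0) t
        + (2 * (a (n + 1) : ℤ) - 1) * D n (σ (n + 1) 1) t
        + D n (σ (n + 1) 2) t
        + (a (n + 1) : ℤ) * (kd (σ (n + 1) 0) t : ℤ)
        + ((a (n + 1) : ℤ) - 1) * (kd (σ (n + 1) 1) t : ℤ) :=
  sum_formula_general m a σ D hD s hs
end

section
/- For every 0 ≤ n ≤ m−1 and every t ∈ {1,2,3}, writing i = i_{n+1}, j = j_{n+1}, a = a_{n+1}, d_{rt} = d_{rt}(n), and d'_{rt} = d_{rt}(n+1), one has d'_{it} − d'_{jt} = (−1)^{μ_a}·(d_{it} + d_{jt} + μ_a·δ_{it} + (1 − μ_a)·δ_{jt}). -/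
/-!
Only rows `i` and `j` of `M = M(a, i, j)` are nonzero, and since `⌈x⌉ - ⌊x⌋` detects whether
`x ∈ {a/2, (a-1)/2}` is an integer, the row difference is `M_i - M_j = (1 - μ) e_j - μ e_i`.
Subtracting row `j` from row `i` in `D' = 2 M D + D + M` therefore gives
`2 ((1 - μ) D_j - μ D_i) + D_i - D_j + (1 - μ) e_j - μ e_i`, which is the claim once `μ ∈ {0, 1}`
is split.
-/

theorem Rat.ceil_sub_floor_intCast_div_two (z : ℤ) :
    ⌈(z : ℚ) / 2⌉ - ⌊(z : ℚ) / 2⌋ = z % 2 := by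
  have h := Rat.ceil_intCast_div_natCast z 2
  have h' := Rat.floor_intCast_div_natCast z 2
  push_cast at h h'
  rw [h, h']
  omega

theorem mu_eq_zero_or_one (c : ℕ) : mu c = 0 ∨ mu c = 1 := by
  unfold mu; split_ifs <;> simp

theorem mu_eq_emod_two (c : ℕ) : (mu c : ℤ) = (c : ℤ) % 2 := by
  unfold mu
  split_ifs with h
  · obtain ⟨k, rfl⟩ := h; push_cast; omega
  · obtain ⟨k, rfl⟩ := Nat.not_odd_iff_even.mp h; push_cast; omega

theorem one_sub_mu_eq_emod_two (c : ℕ) : 1 - (mu c : ℤ) = ((c : ℤ) - 1) % 2 := by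
  rw [mu_eq_emod_two]; omega

theorem Mmat_row_sub {a : ℕ} {i j : Fin 3} (hij : i ≠ j) (t : Fin 3) :
    Mmat a i j i t - Mmat a i j j t = (1 - mu a) * (kd j t : ℤ) - mu a * (kd i t : ℤ) := by
  have hceil : ⌈(a : ℚ) / 2⌉ - ⌊(a : ℚ) / 2⌋ = mu a := by
    rw [mu_eq_emod_two, ← Rat.ceil_sub_floor_intCast_div_two]; push_cast; rfl
  have hceil' : ⌈((a : ℚ) - 1) / 2⌉ - ⌊((a : ℚ) - 1) / 2⌋ = 1 - mu a := by
    rw [one_sub_mu_eq_emod_two, ← Rat.ceil_sub_floor_intCast_div_two]; push_cast; rfl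
  by_cases hti : t = i
  · subst hti
    simp only [Mmat, Matrix.of_apply, and_self, ↓reduceIte, hij.symm, and_true, hij, kd,
      CharP.cast_eq_zero, mul_zero, Nat.cast_one, mul_one, zero_sub]
    linarith
  by_cases htj : t = j
  · subst htj
    simp only [Mmat, Matrix.of_apply, hij.symm, and_false, ↓reduceIte, and_self, and_true, kd,
      Nat.cast_one, mul_one, hij, CharP.cast_eq_zero, mul_zero, sub_zero]
    linarith
  simp [Mmat, kd, hij, hij.symm, hti, htj, Ne.symm hti, Ne.symm htj]

theorem Mmat_mul_row_sub {a : ℕ} {i j : Fin 3} (hij : i ≠ j) (D : Matrix (Fin 3) (Fin 3) ℤ)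
    (t : Fin 3) :
    (Mmat a i j * D) i t - (Mmat a i j * D) j t = (1 - mu a) * D j t - mu a * D i t := by
  simp only [Matrix.mul_apply, ← Finset.sum_sub_distrib, ← sub_mul, Mmat_row_sub hij, kd]
  simp [sub_mul, Finset.sum_sub_distrib]

theorem step_row_sub {a : ℕ} {D E : Matrix (Fin 3) (Fin 3) ℤ} {i j : Fin 3} (hij : i ≠ j)
    (hE : E = 2 * Mmat a i j * D + D + Mmat a i j) (t : Fin 3) :
    E i t - E j t = (-1 : ℤ) ^ mu a * (D i t + D j t + mu a * kd i t + (1 - mu a) * kd j t) := by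
  have hMD := Mmat_mul_row_sub (a := a) hij D t
  have hM := Mmat_row_sub (a := a) hij t
  subst hE
  simp only [Matrix.add_apply, two_mul, Matrix.add_mul]
  rcases mu_eq_zero_or_one a with h | h <;> rw [h] at hMD hM ⊢ <;> push_cast at * <;> linarith

theorem guide_difference_general
    (m : ℕ) (a : ℕ → ℕ)
    (σ : ℕ → Equiv.Perm (Fin 3))
    (D : ℕ → Matrix (Fin 3) (Fin 3) ℤ)
    (hD : ∀ n, n + 1 ≤ m →
      D (n + 1) = 2 * Mmat (a (n + 1)) (σ (n + 1) 0) (σ (n + 1) 1) * D n + D n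
        + Mmat (a (n + 1)) (σ (n + 1) 0) (σ (n + 1) 1))
 :
    ∀ n, n + 1 ≤ m → ∀ t : Fin 3,
      D (n + 1) (σ (n + 1) 0) t - D (n + 1) (σ (n + 1) 1) t
        = (-1 : ℤ) ^ (mu (a (n + 1))) *
          (D n (σ (n + 1) 0) t + D n (σ (n + 1) 1) t
            + (mu (a (n + 1)) : ℤ) * (kd (σ (n + 1) 0) t : ℤ)
            + (1 - (mu (a (n + 1)) : ℤ)) * (kd (σ (n + 1) 1) t : ℤ)) := by
  intro n hn t
  exact step_row_sub ((σ (n + 1)).injective.ne (by decide : (0 : Fin 3) ≠ 1)) (hD n hn) t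

theorem guide_difference
    (m : ℕ) (hm : 1 ≤ m) (a : ℕ → ℕ)
    (ha : ∀ n, 1 ≤ n → n ≤ m → 0 < a n)
    (σ : ℕ → Equiv.Perm (Fin 3))
    (hσ1 : σ 1 = 1)
    (hσ : ∀ n, 1 ≤ n → n ≤ m →
      σ (n + 1) = if Even (a n) then σ n * trans13 else σ n * cyc132)
    (D : ℕ → Matrix (Fin 3) (Fin 3) ℤ)
    (hD0 : D 0 = 0)
    (hD : ∀ n, n + 1 ≤ m →
      D (n + 1) = 2 * Mmat (a (n + 1)) (σ (n + 1) 0) (σ (n + 1) 1) * D n + D n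
        + Mmat (a (n + 1)) (σ (n + 1) 0) (σ (n + 1) 1))
    (s : ℕ → Fin 3 → ℤ)
    (hs : ∀ n t, s n t = D n 0 t + D n 1 t + D n 2 t)
 :
    ∀ n, n + 1 ≤ m → ∀ t : Fin 3,
      D (n + 1) (σ (n + 1) 0) t - D (n + 1) (σ (n + 1) 1) t
        = (-1 : ℤ) ^ (mu (a (n + 1))) *
          (D n (σ (n + 1) 0) t + D n (σ (n + 1) 1) t
            + (mu (a (n + 1)) : ℤ) * (kd (σ (n + 1) 0) t : ℤ)
            + (1 - (mu (a (n + 1)) : ℤ)) * (kd (σ (n + 1) 1) t : ℤ)) :=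
  guide_difference_general m a σ D hD
end

section
/- For every 1 ≤ n ≤ m and every t ∈ {1,2,3}, writing i = i_{n+1}, j = j_{n+1}, k = k_{n+1}, and d_{rt} = d_{rt}(n), one has s_{n−1,t} = d_{it} − d_{jt} + d_{kt} − δ_{jt}. -/
/-! In `D' = 2 M D + D + M` with `M = M(a, i, j)`, row `k` of `M` vanishes, so row `k` of `D'`
equals that of `D`. Since `⌈c/2⌉ - ⌊c/2⌋ = c mod 2`, row `i` minus row `j` of `M` is `e_j`
for even `a` and `-e_i` for odd `a`; hence `D'_i - D'_j = D_i + D_j + e_j` (even) and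
`D'_j - D'_i = D_i + D_j + e_i` (odd). The next ordering `(i, j, k) ↦ (k, j, i)` resp.
`(k, i, j)` is exactly the one for which the alternating row sum of `D'` gives back the column
sums of `D`. -/

theorem ceil_half_eq_floor_half_add_emod (c : ℤ) :
    ⌈(c : ℚ) / 2⌉ = ⌊(c : ℚ) / 2⌋ + c % 2 := by
  have h2 : ((2 : ℕ) : ℚ) = 2 := by norm_num
  rw [← h2, Rat.ceil_intCast_div_natCast, Rat.floor_intCast_div_natCast]
  omega

section Mmat

variable {a : ℕ} {i j : Fin 3}

theorem Mmat_apply_of_ne {k : Fin 3} (hki : k ≠ i) (hkj : k ≠ j) (t : Fin 3) :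
    Mmat a i j k t = 0 := by
  simp [Mmat, hki, hkj]

theorem Mmat_sub_of_even (hij : i ≠ j) (ha : Even a) (t : Fin 3) :
    Mmat a i j i t - Mmat a i j j t = kd j t := by
  have hA := ceil_half_eq_floor_half_add_emod a
  have hB := ceil_half_eq_floor_half_add_emod (a - 1)
  have ha2 : (a : ℤ) % 2 = 0 := by have := Nat.even_iff.mp ha; omega
  push_cast at hA hB
  rcases eq_or_ne t i with rfl | hti
  · simp [Mmat, kd, hij, hij.symm, hA, ha2]
  rcases eq_or_ne t j with rfl | htj
  · simp [Mmat, kd, hij.symm, hB]; omega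
  simp [Mmat, kd, hti, htj, htj.symm]

theorem Mmat_sub_of_odd (hij : i ≠ j) (ha : Odd a) (t : Fin 3) :
    Mmat a i j j t - Mmat a i j i t = kd i t := by
  have hA := ceil_half_eq_floor_half_add_emod a
  have hB := ceil_half_eq_floor_half_add_emod (a - 1)
  have ha2 : (a : ℤ) % 2 = 1 := by have := Nat.odd_iff.mp ha; omega
  push_cast at hA hB
  rcases eq_or_ne t i with rfl | hti
  · simp [Mmat, kd, hij, hij.symm, hA, ha2]
  rcases eq_or_ne t j with rfl | htj
  · simp [Mmat, kd, hij.symm, hB]; omega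
  simp [Mmat, kd, hti, htj, hti.symm]

variable (X : Matrix (Fin 3) (Fin 3) ℤ) (t : Fin 3)

theorem Mmat_mul_apply_of_ne {k : Fin 3} (hki : k ≠ i) (hkj : k ≠ j) :
    (Mmat a i j * X) k t = 0 := by
  simp [Matrix.mul_apply, Mmat_apply_of_ne hki hkj]

theorem Mmat_mul_sub_of_even (hij : i ≠ j) (ha : Even a) :
    (Mmat a i j * X) i t - (Mmat a i j * X) j t = X j t := by
  simp [Matrix.mul_apply, ← Finset.sum_sub_distrib, ← sub_mul, Mmat_sub_of_even hij ha, kd]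

theorem Mmat_mul_sub_of_odd (hij : i ≠ j) (ha : Odd a) :
    (Mmat a i j * X) j t - (Mmat a i j * X) i t = X i t := by
  simp [Matrix.mul_apply, ← Finset.sum_sub_distrib, ← sub_mul, Mmat_sub_of_odd hij ha, kd]

theorem Mmat_step_apply (r : Fin 3) :
    (2 * Mmat a i j * X + X + Mmat a i j : Matrix (Fin 3) (Fin 3) ℤ) r t
      = 2 * (Mmat a i j * X) r t + X r t + Mmat a i j r t := by
  simp only [two_mul, Matrix.add_mul, Matrix.add_apply]

end Mmat

theorem sum_col_eq_of_Mmat_step {a : ℕ} {τ τ' : Equiv.Perm (Fin 3)}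
    {X Y : Matrix (Fin 3) (Fin 3) ℤ}
    (hτ' : τ' = if Even a then τ * trans13 else τ * cyc132)
    (hY : Y = 2 * Mmat a (τ 0) (τ 1) * X + X + Mmat a (τ 0) (τ 1)) (t : Fin 3) :
    ∑ r, X r t = Y (τ' 0) t - Y (τ' 1) t + Y (τ' 2) t - kd (τ' 1) t := by
  have hsum : ∑ r, X r t = X (τ 0) t + X (τ 1) t + X (τ 2) t := by
    rw [← Equiv.sum_comp τ, Fin.sum_univ_three]
  have h01 : τ 0 ≠ τ 1 := τ.injective.ne (by decide)
  have h20 : τ 2 ≠ τ 0 := τ.injective.ne (by decide)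
  have h21 : τ 2 ≠ τ 1 := τ.injective.ne (by decide)
  have hY2 : Y (τ 2) t = X (τ 2) t := by
    rw [hY, Mmat_step_apply, Mmat_mul_apply_of_ne X t h20 h21, Mmat_apply_of_ne h20 h21]; ring
  by_cases ha : Even a
  · have hτ'_apply : τ' 0 = τ 2 ∧ τ' 1 = τ 1 ∧ τ' 2 = τ 0 := by
      have h : trans13 0 = 2 ∧ trans13 1 = 1 ∧ trans13 2 = 0 := by decide
      simp [hτ', ha, h]
    have hM := Mmat_sub_of_even h01 ha t
    have hMX := Mmat_mul_sub_of_even X t h01 ha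
    rw [hτ'_apply.1, hτ'_apply.2.1, hτ'_apply.2.2, hsum, hY2, hY, Mmat_step_apply,
      Mmat_step_apply]
    linarith
  · have ha' := Nat.not_even_iff_odd.mp ha
    have hτ'_apply : τ' 0 = τ 2 ∧ τ' 1 = τ 0 ∧ τ' 2 = τ 1 := by
      have h : cyc132 0 = 2 ∧ cyc132 1 = 0 ∧ cyc132 2 = 1 := by decide
      simp [hτ', ha, h]
    have hM := Mmat_sub_of_odd h01 ha' t
    have hMX := Mmat_mul_sub_of_odd X t h01 ha'
    rw [hτ'_apply.1, hτ'_apply.2.1, hτ'_apply.2.2, hsum, hY2, hY, Mmat_step_apply,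
      Mmat_step_apply]
    linarith

theorem previous_sum_formula_general
    (m : ℕ) (a : ℕ → ℕ)
    (σ : ℕ → Equiv.Perm (Fin 3))
    (hσ : ∀ n, 1 ≤ n → n ≤ m →
      σ (n + 1) = if Even (a n) then σ n * trans13 else σ n * cyc132)
    (D : ℕ → Matrix (Fin 3) (Fin 3) ℤ)
    (hD : ∀ n, n + 1 ≤ m →
      D (n + 1) = 2 * Mmat (a (n + 1)) (σ (n + 1) 0) (σ (n + 1) 1) * D n + D n
        + Mmat (a (n + 1)) (σ (n + 1) 0) (σ (n + 1) 1))
    (s : ℕ → Fin 3 → ℤ)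
    (hs : ∀ n t, s n t = D n 0 t + D n 1 t + D n 2 t)
 :
    ∀ n, 1 ≤ n → n ≤ m → ∀ t : Fin 3,
      s (n - 1) t = D n (σ (n + 1) 0) t - D n (σ (n + 1) 1) t
        + D n (σ (n + 1) 2) t - (kd (σ (n + 1) 1) t : ℤ) := by
  intro n hn hnm t
  obtain ⟨p, rfl⟩ : ∃ p, n = p + 1 := ⟨n - 1, by omega⟩
  rw [Nat.add_sub_cancel, hs, ← Fin.sum_univ_three fun r => D p r t]
  exact sum_col_eq_of_Mmat_step (hσ (p + 1) hn hnm) (hD p hnm) t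

theorem previous_sum_formula
    (m : ℕ) (hm : 1 ≤ m) (a : ℕ → ℕ)
    (ha : ∀ n, 1 ≤ n → n ≤ m → 0 < a n)
    (σ : ℕ → Equiv.Perm (Fin 3))
    (hσ1 : σ 1 = 1)
    (hσ : ∀ n, 1 ≤ n → n ≤ m →
      σ (n + 1) = if Even (a n) then σ n * trans13 else σ n * cyc132)
    (D : ℕ → Matrix (Fin 3) (Fin 3) ℤ)
    (hD0 : D 0 = 0)
    (hD : ∀ n, n + 1 ≤ m →
      D (n + 1) = 2 * Mmat (a (n + 1)) (σ (n + 1) 0) (σ (n + 1) 1) * D n + D n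
        + Mmat (a (n + 1)) (σ (n + 1) 0) (σ (n + 1) 1))
    (s : ℕ → Fin 3 → ℤ)
    (hs : ∀ n t, s n t = D n 0 t + D n 1 t + D n 2 t)
 :
    ∀ n, 1 ≤ n → n ≤ m → ∀ t : Fin 3,
      s (n - 1) t = D n (σ (n + 1) 0) t - D n (σ (n + 1) 1) t
        + D n (σ (n + 1) 2) t - (kd (σ (n + 1) 1) t : ℤ) :=
  previous_sum_formula_general m a σ hσ D hD s hs
end

section
/- For every 0 ≤ n ≤ m and every t ∈ {1,2,3}, writing i = i_{n+1}, j = j_{n+1}, k = k_{n+1}, and d_{rt} = d_{rt}(n), one has d_{kt} = d_{it} + d_{jt} − δ_{kt} + δ_{3t} + (−1)^{δ_{3t}}·μ_n. -/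
open Matrix

section Recurrence

variable {n R : Type*} [Fintype n] [DecidableEq n] [Ring R]

lemma recurrence_row_of_row_eq_zero {M D : Matrix n n R} {k : n} (hk : M k = 0) :
    (2 * M * D + D + M : Matrix n n R) k = D k := by
  ext t
  simp [two_mul, add_mul, Matrix.mul_apply, hk]

lemma recurrence_row_sub_of_row_sub_eq_single {M D : Matrix n n R} {r s u : n}
    (h : M r - M s = Pi.single u 1) :
    (2 * M * D + D + M : Matrix n n R) r - (2 * M * D + D + M : Matrix n n R) s
      = D r - D s + 2 • D u + Pi.single u 1 := by
  have hMD : (M * D : Matrix n n R) r - (M * D : Matrix n n R) s = D u :=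
    calc _ = (M r - M s) ᵥ* D := (sub_vecMul _ _ _).symm
      _ = D u := by rw [h, single_one_vecMul]; rfl
  calc (2 * M * D + D + M : Matrix n n R) r - (2 * M * D + D + M : Matrix n n R) s
      = 2 • ((M * D : Matrix n n R) r - (M * D : Matrix n n R) s) + (D r - D s) + (M r - M s) := by
        ext t
        simp only [two_mul, add_mul, Pi.sub_apply, Pi.add_apply, Pi.smul_apply, Matrix.add_apply]
        abel
    _ = D r - D s + 2 • D u + Pi.single u 1 := by rw [hMD, h]; abel

end Recurrence

lemma Rat.floor_intCast_div_two (z : ℤ) : ⌊(z : ℚ) / 2⌋ = z / 2 := by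
  exact_mod_cast Rat.floor_intCast_div_natCast z 2

lemma Rat.ceil_intCast_div_two (z : ℤ) : ⌈(z : ℚ) / 2⌉ = -(-z / 2) := by
  exact_mod_cast Rat.ceil_intCast_div_natCast z 2

lemma Mmat_apply (a : ℕ) (i j r t : Fin 3) :
    Mmat a i j r t =
      if r = i ∧ t = i then (a : ℤ) / 2
      else if r = i ∧ t = j then -((1 - a) / 2)
      else if r = j ∧ t = i then -(-a / 2)
      else if r = j ∧ t = j then (a - 1) / 2
      else 0 := by
  have h : ((a : ℚ) - 1) = (((a : ℤ) - 1 : ℤ) : ℚ) := by push_cast; rfl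
  rw [Mmat, Matrix.of_apply, h, ← Int.cast_natCast (R := ℚ), Rat.floor_intCast_div_two,
    Rat.ceil_intCast_div_two, Rat.floor_intCast_div_two, Rat.ceil_intCast_div_two]
  congr 4; ring

lemma Mmat_row_eq_zero (a : ℕ) {i j k : Fin 3} (hki : k ≠ i) (hkj : k ≠ j) : Mmat a i j k = 0 := by
  ext t
  simp [Mmat, hki, hkj]

lemma Mmat_row_sub_of_even {a : ℕ} (ha : Even a) {i j : Fin 3} (hij : i ≠ j) :
    Mmat a i j i - Mmat a i j j = Pi.single j 1 := by
  obtain ⟨b, rfl⟩ := ha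
  ext t
  simp only [Pi.sub_apply, Mmat_apply, Pi.single_apply]
  split_ifs <;> grind

lemma Mmat_row_sub_of_odd {a : ℕ} (ha : Odd a) {i j : Fin 3} (hij : i ≠ j) :
    Mmat a i j j - Mmat a i j i = Pi.single i 1 := by
  obtain ⟨b, rfl⟩ := ha
  ext t
  simp only [Pi.sub_apply, Mmat_apply, Pi.single_apply]
  split_ifs <;> grind

lemma Equiv.Perm.fin_three_sum_comp {M : Type*} [AddCommMonoid M]
    (P : Equiv.Perm (Fin 3)) (f : Fin 3 → M) : f (P 0) + f (P 1) + f (P 2) = f 0 + f 1 + f 2 := by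
  simpa only [Fin.sum_univ_three] using Equiv.sum_comp P f

lemma sum_kd_perm (P : Equiv.Perm (Fin 3)) (t : Fin 3) :
    (kd (P 0) t : ℤ) + kd (P 1) t + kd (P 2) t = 1 := by
  rw [P.fin_three_sum_comp (fun r => (kd r t : ℤ))]
  fin_cases t <;> rfl

lemma kd_eq_single (r t : Fin 3) : (kd r t : ℤ) = (Pi.single r 1 : Fin 3 → ℤ) t := by
  simp [kd, Pi.single_apply, eq_comm]

lemma two_mul_kd_add_neg_one_pow_kd (r t : Fin 3) : 2 * (kd r t : ℤ) + (-1) ^ kd r t = 1 := by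
  unfold kd; split_ifs <;> rfl

lemma mu_succ (n : ℕ) : (mu (n + 1) : ℤ) = 1 - mu n := by
  unfold mu; split_ifs <;> grind

def IdleRowFormula (P : Equiv.Perm (Fin 3)) (D : Matrix (Fin 3) (Fin 3) ℤ) (w : ℤ) : Prop :=
  ∀ t, D (P 2) t = D (P 0) t + D (P 1) t - kd (P 2) t + kd 2 t + (-1) ^ kd 2 t * w

lemma IdleRowFormula.next {P Q : Equiv.Perm (Fin 3)} {M D : Matrix (Fin 3) (Fin 3) ℤ} {w : ℤ}
    (h : IdleRowFormula P D w) (hQ : Q 0 = P 2) (hidle : M (P 2) = 0)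
    (hM : M (Q 2) - M (Q 1) = Pi.single (Q 1) 1) :
    IdleRowFormula Q (2 * M * D + D + M) (1 - w) := by
  intro t
  have hk := congrFun (recurrence_row_of_row_eq_zero (D := D) hidle) t
  have hrows := congrFun (recurrence_row_sub_of_row_sub_eq_single (D := D) hM) t
  have hP := P.fin_three_sum_comp (fun r => D r t)
  have hQD := Q.fin_three_sum_comp (fun r => D r t)
  have hkd := sum_kd_perm Q t
  have h2 := two_mul_kd_add_neg_one_pow_kd 2 t
  simp only [Pi.sub_apply, Pi.add_apply, two_nsmul, ← kd_eq_single] at hrows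
  rw [hQ] at hQD hkd ⊢
  linear_combination hrows - hk - h t - hP + hQD + hkd - h2

lemma IdleRowFormula.step {P : Equiv.Perm (Fin 3)} {D : Matrix (Fin 3) (Fin 3) ℤ} {w : ℤ}
    (h : IdleRowFormula P D w) (A : ℕ) :
    IdleRowFormula (P * if Even A then trans13 else cyc132)
      (2 * Mmat A (P 0) (P 1) * D + D + Mmat A (P 0) (P 1)) (1 - w) := by
  have hij : P 0 ≠ P 1 := P.injective.ne (by decide)
  have hidle := Mmat_row_eq_zero A (P.injective.ne (by decide : (2 : Fin 3) ≠ 0))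
    (P.injective.ne (by decide : (2 : Fin 3) ≠ 1))
  split_ifs with hA
  · obtain ⟨h0, h1, h2⟩ : trans13 0 = 2 ∧ trans13 1 = 1 ∧ trans13 2 = 0 := by decide
    refine h.next (by simp [h0]) hidle ?_
    simpa [h1, h2] using Mmat_row_sub_of_even hA hij
  · obtain ⟨h0, h1, h2⟩ : cyc132 0 = 2 ∧ cyc132 1 = 0 ∧ cyc132 2 = 1 := by decide
    refine h.next (by simp [h0]) hidle ?_
    simpa [h1, h2] using Mmat_row_sub_of_odd (Nat.not_even_iff_odd.mp hA) hij

theorem idle_row_formula_general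
    (m : ℕ) (a : ℕ → ℕ)
    (σ : ℕ → Equiv.Perm (Fin 3))
    (hσ1 : σ 1 = 1)
    (hσ : ∀ n, 1 ≤ n → n ≤ m →
      σ (n + 1) = if Even (a n) then σ n * trans13 else σ n * cyc132)
    (D : ℕ → Matrix (Fin 3) (Fin 3) ℤ)
    (hD0 : D 0 = 0)
    (hD : ∀ n, n + 1 ≤ m →
      D (n + 1) = 2 * Mmat (a (n + 1)) (σ (n + 1) 0) (σ (n + 1) 1) * D n + D n
        + Mmat (a (n + 1)) (σ (n + 1) 0) (σ (n + 1) 1))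
 :
    ∀ n ≤ m, ∀ t : Fin 3,
      D n (σ (n + 1) 2) t = D n (σ (n + 1) 0) t + D n (σ (n + 1) 1) t
        - (kd (σ (n + 1) 2) t : ℤ) + (kd 2 t : ℤ)
        + (-1 : ℤ) ^ (kd 2 t) * (mu n : ℤ) := by
  suffices ∀ n ≤ m, IdleRowFormula (σ (n + 1)) (D n) (mu n) from this
  intro n hn
  induction n with
  | zero => simp [IdleRowFormula, hσ1, hD0, mu]
  | succ n ih =>
    rw [hσ (n + 1) (by omega) hn, ← mul_ite, hD n hn, mu_succ]
    exact (ih (by omega)).step _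

theorem idle_row_formula
    (m : ℕ) (hm : 1 ≤ m) (a : ℕ → ℕ)
    (ha : ∀ n, 1 ≤ n → n ≤ m → 0 < a n)
    (σ : ℕ → Equiv.Perm (Fin 3))
    (hσ1 : σ 1 = 1)
    (hσ : ∀ n, 1 ≤ n → n ≤ m →
      σ (n + 1) = if Even (a n) then σ n * trans13 else σ n * cyc132)
    (D : ℕ → Matrix (Fin 3) (Fin 3) ℤ)
    (hD0 : D 0 = 0)
    (hD : ∀ n, n + 1 ≤ m →
      D (n + 1) = 2 * Mmat (a (n + 1)) (σ (n + 1) 0) (σ (n + 1) 1) * D n + D n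
        + Mmat (a (n + 1)) (σ (n + 1) 0) (σ (n + 1) 1))
    (s : ℕ → Fin 3 → ℤ)
    (hs : ∀ n t, s n t = D n 0 t + D n 1 t + D n 2 t)
 :
    ∀ n ≤ m, ∀ t : Fin 3,
      D n (σ (n + 1) 2) t = D n (σ (n + 1) 0) t + D n (σ (n + 1) 1) t
        - (kd (σ (n + 1) 2) t : ℤ) + (kd 2 t : ℤ)
        + (-1 : ℤ) ^ (kd 2 t) * (mu n : ℤ) :=
  idle_row_formula_general m a σ hσ1 hσ D hD0 hD
end

section
/- For every 0 ≤ n ≤ m and every t ∈ {1,2,3}, writing k = k_{n+1} and d_{rt} = d_{rt}(n), one has s_{n,t} = 2·d_{kt} + δ_{kt} − δ_{3t} − (−1)^{δ_{3t}}·μ_n. -/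
open Matrix

def flipSign {ι : Type*} [DecidableEq ι] (k : ι) : ι → ℤ := Function.update 1 k (-1)

section flipSign

variable {ι : Type*} [DecidableEq ι]

theorem flipSign_eq (k : ι) : flipSign k = 1 - 2 • Pi.single k 1 := by
  ext r
  by_cases h : r = k
  · subst h; simp [flipSign]
  · simp [flipSign, h]

theorem flipSign_vecMul_apply [Fintype ι] (k : ι) (A : Matrix ι ι ℤ) (t : ι) :
    (flipSign k ᵥ* A) t = ∑ r, A r t - 2 * A k t := by
  rw [flipSign_eq, sub_vecMul, smul_vecMul, single_one_vecMul]
  simp [vecMul, dotProduct]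

theorem flipSign_comp_symm (σ : Equiv.Perm ι) (k : ι) : flipSign k ∘ σ.symm = flipSign (σ k) := by
  simp [flipSign, Function.update_comp_equiv]

end flipSign

theorem vecMul_eq_neg_one_pow_smul {R ι : Type*} [Ring R] [Fintype ι] (m : ℕ) (w : ℕ → ι → R)
    (N E : ℕ → Matrix ι ι R) (hE : ∀ n, n + 1 ≤ m → E (n + 1) = N (n + 1) * E n)
    (hw : ∀ n, n + 1 ≤ m → w (n + 1) ᵥ* N (n + 1) = -w n) :
    ∀ n ≤ m, w n ᵥ* E n = (-1) ^ n • (w 0 ᵥ* E 0) := by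
  intro n hn
  induction n with
  | zero => simp
  | succ n ih =>
    rw [hE n hn, ← vecMul_vecMul, hw n hn, neg_vecMul, ih (by omega), pow_succ,
      mul_neg_one, neg_smul]

theorem Mmat_two_mul (b : ℕ) :
    Mmat (2 * b) 0 1 = !![(b : ℤ), b, 0; b, b - 1, 0; 0, 0, 0] := by
  ext r t
  fin_cases r <;> fin_cases t <;> simp [Mmat]
  all_goals
    first | rw [Int.floor_eq_iff] | rw [Int.ceil_eq_iff]
    push_cast
    constructor <;> linarith

theorem Mmat_two_mul_add_one (b : ℕ) :
    Mmat (2 * b + 1) 0 1 = !![(b : ℤ), b, 0; b + 1, b, 0; 0, 0, 0] := by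
  ext r t
  fin_cases r <;> fin_cases t <;> simp [Mmat]
  all_goals
    first | rw [Int.floor_eq_iff] | rw [Int.ceil_eq_iff]
    push_cast
    constructor <;> linarith

theorem flipSign_vecMul_Mmat (a : ℕ) :
    flipSign (stepPerm a 2) ᵥ* (2 • Mmat a 0 1 + 1) = -flipSign 2 := by
  ext u
  rw [flipSign_vecMul_apply]
  rcases Nat.even_or_odd' a with ⟨b, rfl | rfl⟩
  · rw [Mmat_two_mul]
    fin_cases u <;> simp [stepPerm, trans13, flipSign, Fin.sum_univ_three, one_apply] <;> ring
  · rw [Mmat_two_mul_add_one]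
    fin_cases u <;> simp [stepPerm, cyc132, flipSign, Fin.sum_univ_three, one_apply] <;> ring

theorem flipSign_vecMul_Mmat_perm (a : ℕ) (σ : Equiv.Perm (Fin 3)) :
    flipSign ((σ * stepPerm a) 2) ᵥ* (2 • Mmat a (σ 0) (σ 1) + 1) = -flipSign (σ 2) := by
  set N := 2 • Mmat a (σ 0) (σ 1) + 1
  have hN : N.submatrix σ σ = 2 • Mmat a 0 1 + 1 := by
    ext r t
    simp [N, Mmat, one_apply, σ.injective.eq_iff]
  ext t
  obtain ⟨u, rfl⟩ := σ.surjective t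
  have h := congrFun (submatrix_vecMul_equiv N (flipSign (stepPerm a 2)) σ σ) u
  rw [hN, flipSign_vecMul_Mmat, flipSign_comp_symm] at h
  rw [Equiv.Perm.mul_apply, ← Function.comp_apply (f := flipSign _ ᵥ* N), ← h,
    ← flipSign_comp_symm σ 2]
  simp

theorem two_smul_add_one_step_eq_mul {R ι : Type*} [Ring R] [Fintype ι] [DecidableEq ι]
    (M D : Matrix ι ι R) :
    2 • (2 * M * D + D + M) + 1 = (2 • M + 1) * (2 • D + 1) := by
  simp only [two_smul, two_mul, add_mul, mul_add, mul_one, one_mul]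
  abel

theorem neg_one_pow_eq_one_sub_two_mul_mu (n : ℕ) : (-1 : ℤ) ^ n = 1 - 2 * mu n := by
  rcases n.even_or_odd with hn | hn
  · simp [mu, hn.neg_one_pow, Nat.not_odd_iff_even.mpr hn]
  · simp [mu, hn.neg_one_pow, hn]

theorem sum_eq_of_flipSign_vecMul (D : Matrix (Fin 3) (Fin 3) ℤ) (k t : Fin 3) (n : ℕ)
    (h : flipSign k ᵥ* (2 • D + 1) = (-1) ^ n • flipSign 2) :
    D 0 t + D 1 t + D 2 t = 2 * D k t + kd k t - kd 2 t - (-1) ^ kd 2 t * mu n := by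
  have ht := congrFun h t
  rw [flipSign_vecMul_apply] at ht
  simp only [Fin.sum_univ_three, Matrix.add_apply, Matrix.smul_apply, smul_eq_mul,
    one_apply, Pi.smul_apply, flipSign, Function.update_apply, Pi.one_apply] at ht
  rw [neg_one_pow_eq_one_sub_two_mul_mu] at ht
  fin_cases k <;> fin_cases t <;> simp [kd] at ht ⊢ <;> omega

theorem sum_from_idle_row_general
    (m : ℕ) (a : ℕ → ℕ)
    (σ : ℕ → Equiv.Perm (Fin 3))
    (hσ1 : σ 1 = 1)
    (hσ : ∀ n, 1 ≤ n → n ≤ m →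
      σ (n + 1) = if Even (a n) then σ n * trans13 else σ n * cyc132)
    (D : ℕ → Matrix (Fin 3) (Fin 3) ℤ)
    (hD0 : D 0 = 0)
    (hD : ∀ n, n + 1 ≤ m →
      D (n + 1) = 2 * Mmat (a (n + 1)) (σ (n + 1) 0) (σ (n + 1) 1) * D n + D n
        + Mmat (a (n + 1)) (σ (n + 1) 0) (σ (n + 1) 1))
    (s : ℕ → Fin 3 → ℤ)
    (hs : ∀ n t, s n t = D n 0 t + D n 1 t + D n 2 t)
 :
    ∀ n ≤ m, ∀ t : Fin 3,
      s n t = 2 * D n (σ (n + 1) 2) t + (kd (σ (n + 1) 2) t : ℤ)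
        - (kd 2 t : ℤ) - (-1 : ℤ) ^ (kd 2 t) * (mu n : ℤ) := by
  intro n hn t
  have hE : ∀ k, k + 1 ≤ m → 2 • D (k + 1) + 1 =
      (2 • Mmat (a (k + 1)) (σ (k + 1) 0) (σ (k + 1) 1) + 1) * (2 • D k + 1) := by
    intro k hk
    rw [hD k hk, two_smul_add_one_step_eq_mul]
  have hw : ∀ k, k + 1 ≤ m → flipSign (σ (k + 1 + 1) 2) ᵥ*
      (2 • Mmat (a (k + 1)) (σ (k + 1) 0) (σ (k + 1) 1) + 1) = -flipSign (σ (k + 1) 2) := by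
    intro k hk
    rw [hσ (k + 1) (by omega) hk, ← mul_ite]
    exact flipSign_vecMul_Mmat_perm _ _
  have key := vecMul_eq_neg_one_pow_smul m (fun k ↦ flipSign (σ (k + 1) 2))
    (fun k ↦ 2 • Mmat (a k) (σ k 0) (σ k 1) + 1) (fun k ↦ 2 • D k + 1) hE hw n hn
  simp only [hD0, hσ1, smul_zero, zero_add, vecMul_one, Equiv.Perm.one_apply] at key
  rw [hs]
  exact sum_eq_of_flipSign_vecMul _ _ _ _ key

theorem sum_from_idle_row
    (m : ℕ) (hm : 1 ≤ m) (a : ℕ → ℕ)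
    (ha : ∀ n, 1 ≤ n → n ≤ m → 0 < a n)
    (σ : ℕ → Equiv.Perm (Fin 3))
    (hσ1 : σ 1 = 1)
    (hσ : ∀ n, 1 ≤ n → n ≤ m →
      σ (n + 1) = if Even (a n) then σ n * trans13 else σ n * cyc132)
    (D : ℕ → Matrix (Fin 3) (Fin 3) ℤ)
    (hD0 : D 0 = 0)
    (hD : ∀ n, n + 1 ≤ m →
      D (n + 1) = 2 * Mmat (a (n + 1)) (σ (n + 1) 0) (σ (n + 1) 1) * D n + D n
        + Mmat (a (n + 1)) (σ (n + 1) 0) (σ (n + 1) 1))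
    (s : ℕ → Fin 3 → ℤ)
    (hs : ∀ n t, s n t = D n 0 t + D n 1 t + D n 2 t)
 :
    ∀ n ≤ m, ∀ t : Fin 3,
      s n t = 2 * D n (σ (n + 1) 2) t + (kd (σ (n + 1) 2) t : ℤ)
        - (kd 2 t : ℤ) - (-1 : ℤ) ^ (kd 2 t) * (mu n : ℤ) :=
  sum_from_idle_row_general m a σ hσ1 hσ D hD0 hD s hs
end
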